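/- Let k be a field of characteristic zero and let P = MvPolynomial (Fin 3) k with u₁ = X 0, u₂ = X 1, u₃ = X 2 and Poisson bracket ⁅p,q⁆ = u₁·(∂₀p·∂₂q − ∂₂p·∂₀q) + u₂·(∂₁p·∂₂q − ∂₂p·∂₁q), where ∂ᵢ = pderiv i (so ⁅u₁,u₂⁆ = 0, ⁅u₂,u₃⁆ = u₂, ⁅u₁,u₃⁆ = u₁). If w ∈ P is Poisson normal, i.e., ⁅w, a⁆ lies in the ideal generated by w for every a ∈ P, then w belongs to the subalgebra k[u₁,u₂] generated by u₁ and u₂, and w is homogeneous. -/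

import Mathlib

open MvPolynomial

/-- The Poisson bracket on `P = k[u₁,u₂,u₃]` with
`⁅u₁,u₂⁆ = 0`, `⁅u₂,u₃⁆ = u₂`, `⁅u₁,u₃⁆ = u₁`. -/
noncomputable def linBracket {k : Type*} [Field k]
    (p q : MvPolynomial (Fin 3) k) : MvPolynomial (Fin 3) k :=
  X 0 * (pderiv 0 p * pderiv 2 q - pderiv 2 p * pderiv 0 q) +
    X 1 * (pderiv 1 p * pderiv 2 q - pderiv 2 p * pderiv 1 q)

section Aux

variable {k : Type*} [Field k]

lemma coeff_pderiv' (i : Fin 3) (w : MvPolynomial (Fin 3) k) (m : Fin 3 →₀ ℕ) :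
    coeff m (pderiv i w) = ((m i : k) + 1) * coeff (m + Finsupp.single i 1) w := by
  classical
  induction w using MvPolynomial.induction_on' with
  | add p q hp hq => simp [hp, hq, mul_add]
  | monomial s a =>
    rw [pderiv_monomial, coeff_monomial, coeff_monomial]
    by_cases h : m + Finsupp.single i 1 = s
    · have hs : s - Finsupp.single i 1 = m := by
        ext j; rw [← h]; simp [Finsupp.single_apply]
      have hsi : s i = m i + 1 := by rw [← h]; simp
      rw [if_pos hs, if_pos h.symm, hsi]
      push_cast; ring
    · have hR : (if s = m + Finsupp.single i 1 then a else 0) = 0 :=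
        if_neg (fun hh => h hh.symm)
      rw [hR, mul_zero]
      by_cases h2 : s - Finsupp.single i 1 = m
      · have hsi : s i = 0 := by
          by_contra hne
          apply h
          ext j
          rw [← h2]
          simp only [Finsupp.add_apply, Finsupp.tsub_apply, Finsupp.single_apply]
          rcases eq_or_ne i j with rfl | hij
          · simp; omega
          · simp [hij]
        rw [if_pos h2, hsi]; simp
      · rw [if_neg h2]

lemma coeff_X_mul_pderiv (i : Fin 3) (w : MvPolynomial (Fin 3) k) (m : Fin 3 →₀ ℕ) :
    coeff m (X i * pderiv i w) = (m i : k) * coeff m w := by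
  classical
  rw [coeff_X_mul']
  by_cases h : i ∈ m.support
  · have hmi : 1 ≤ m i := by rwa [Finsupp.mem_support_iff, ← Nat.one_le_iff_ne_zero] at h
    rw [if_pos h, coeff_pderiv']
    have h1 : ((m - Finsupp.single i 1 : Fin 3 →₀ ℕ)) i = m i - 1 := by
      simp [Finsupp.tsub_apply]
    have h2 : m - Finsupp.single i 1 + Finsupp.single i 1 = m := by
      ext j
      simp only [Finsupp.add_apply, Finsupp.tsub_apply, Finsupp.single_apply]
      rcases eq_or_ne i j with rfl | hij
      · simp; omega
      · simp [hij]
    rw [h1, h2]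
    congr 1
    have : ((m i - 1 : ℕ) : k) = (m i : k) - 1 := by
      push_cast [hmi]; ring
    rw [this]; ring
  · rw [if_neg h]
    rw [Finsupp.notMem_support_iff] at h
    rw [h]; simp

lemma deg3 (m : Fin 3 →₀ ℕ) : Finsupp.degree m = m 0 + m 1 + m 2 := by
  rw [Finsupp.degree_apply]
  rw [Finset.sum_subset (Finset.subset_univ m.support)
    (by intro x _ hx; rwa [Finsupp.notMem_support_iff] at hx)]
  simp [Fin.sum_univ_three]

lemma degree_le_totalDegree {p : MvPolynomial (Fin 3) k} {m : Fin 3 →₀ ℕ}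
    (h : m ∈ p.support) : Finsupp.degree m ≤ p.totalDegree :=
  MvPolynomial.le_totalDegree h

lemma homogeneousComponent_top_ne_zero {p : MvPolynomial (Fin 3) k} (hp : p ≠ 0) :
    homogeneousComponent p.totalDegree p ≠ 0 := by
  obtain ⟨m, hm, hdeg⟩ : ∃ m ∈ p.support, Finsupp.degree m = p.totalDegree := by
    obtain ⟨m, hm, h⟩ :=
      Finset.exists_mem_eq_sup p.support (support_nonempty.2 hp)
        (fun s => s.sum fun _ e => e)
    refine ⟨m, hm, ?_⟩
    have : p.totalDegree = m.sum fun _ e => e := h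
    rw [this]; rfl
  intro h0
  have := coeff_homogeneousComponent (φ := p) p.totalDegree m
  rw [h0, if_pos hdeg] at this
  exact (MvPolynomial.mem_support_iff.1 hm) (by rw [← this, coeff_zero])

lemma totalDegree_add_le_totalDegree_mul {p q : MvPolynomial (Fin 3) k}
    (hp : p ≠ 0) (hq : q ≠ 0) :
    p.totalDegree + q.totalDegree ≤ (p * q).totalDegree := by
  set d := p.totalDegree
  set t := q.totalDegree
  have hpd := homogeneousComponent_top_ne_zero hp
  have hqt := homogeneousComponent_top_ne_zero hq
  have hne : homogeneousComponent d p * homogeneousComponent t q ≠ 0 :=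
    mul_ne_zero hpd hqt
  obtain ⟨m, hm⟩ := support_nonempty.2 hne
  have hmdeg : Finsupp.degree m = d + t := by
    have := (homogeneousComponent_isHomogeneous d p).mul
      (homogeneousComponent_isHomogeneous t q) (MvPolynomial.mem_support_iff.1 hm)
    rwa [Pi.one_def, ← Finsupp.degree_eq_weight_one] at this
  have hcoeff : coeff m (p * q) =
      coeff m (homogeneousComponent d p * homogeneousComponent t q) := by
    rw [coeff_mul, coeff_mul]
    refine Finset.sum_congr rfl fun x hx => ?_
    rw [Finset.HasAntidiagonal.mem_antidiagonal] at hx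
    rw [coeff_homogeneousComponent, coeff_homogeneousComponent]
    by_cases h1 : coeff x.1 p = 0
    · simp [h1]
    by_cases h2 : coeff x.2 q = 0
    · simp [h2]
    have hd1 : Finsupp.degree x.1 ≤ d :=
      degree_le_totalDegree (MvPolynomial.mem_support_iff.2 h1)
    have hd2 : Finsupp.degree x.2 ≤ t :=
      degree_le_totalDegree (MvPolynomial.mem_support_iff.2 h2)
    have hsum : Finsupp.degree x.1 + Finsupp.degree x.2 = d + t := by
      rw [← hmdeg, ← hx]
      simp [deg3, Finsupp.add_apply]; ring
    have e1 : Finsupp.degree x.1 = d := by omega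
    have e2 : Finsupp.degree x.2 = t := by omega
    rw [if_pos e1, if_pos e2]
  have : m ∈ (p * q).support := by
    rw [MvPolynomial.mem_support_iff, hcoeff]
    exact MvPolynomial.mem_support_iff.1 hm
  calc d + t = Finsupp.degree m := hmdeg.symm
    _ ≤ (p * q).totalDegree := degree_le_totalDegree this

lemma eq_C_of_totalDegree_eq_zero {c : MvPolynomial (Fin 3) k}
    (h : c.totalDegree = 0) : c = C (coeff 0 c) := by
  ext m
  rcases eq_or_ne m 0 with rfl | hm
  · simp
  · rw [coeff_C, if_neg (Ne.symm hm)]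
    by_contra h0
    have := (totalDegree_eq_zero_iff _ c).1 h m (MvPolynomial.mem_support_iff.2 h0)
    exact hm (Finsupp.ext fun j => this j)

end Aux

/-- Any Poisson normal element of `P` lies in `k[u₁,u₂]` and is homogeneous. -/
theorem poisson_normal_mem_homogeneous {k : Type*} [Field k] [CharZero k]
    (w : MvPolynomial (Fin 3) k)
    (hw : ∀ a : MvPolynomial (Fin 3) k, linBracket w a ∈ Ideal.span {w}) :
    w ∈ Algebra.adjoin k ({X 0, X 1} : Set (MvPolynomial (Fin 3) k)) ∧
      ∃ d : ℕ, w.IsHomogeneous d := by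
  classical
  by_cases hw0 : w = 0
  · subst hw0
    exact ⟨Subalgebra.zero_mem _, 0, isHomogeneous_zero _ _ _⟩
  have h1 : w ∣ X 0 * pderiv 2 w := by
    have h := (Ideal.mem_span_singleton).1 (hw (X 0))
    have e : linBracket w (X 0) = -(X 0 * pderiv 2 w) := by
      simp only [linBracket, pderiv_X_self,
        pderiv_X_of_ne (show (0 : Fin 3) ≠ 2 by decide),
        pderiv_X_of_ne (show (0 : Fin 3) ≠ 1 by decide)]
      ring
    rw [e, dvd_neg] at h
    exact h
  -- Step: pderiv 2 w = 0
  have h2 : pderiv 2 w = 0 := by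
    by_contra hne
    obtain ⟨c, hc⟩ := h1
    have hprod : X 0 * pderiv 2 w ≠ 0 := mul_ne_zero (X_ne_zero 0) hne
    have hcne : c ≠ 0 := by rintro rfl; rw [mul_zero] at hc; exact hprod hc
    have hsupp : ∀ m : Fin 3 →₀ ℕ, coeff m (X 0 * pderiv 2 w) ≠ 0 →
        Finsupp.degree m ≤ w.totalDegree := by
      intro m hm
      rw [coeff_X_mul'] at hm
      by_cases h0 : (0 : Fin 3) ∈ m.support
      swap
      · rw [if_neg h0] at hm; exact absurd rfl hm
      rw [if_pos h0, coeff_pderiv'] at hm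
      have hco : coeff (m - Finsupp.single 0 1 + Finsupp.single 2 1) w ≠ 0 :=
        fun h => hm (by rw [h, mul_zero])
      have hm0 : 1 ≤ m 0 := by
        rwa [Finsupp.mem_support_iff, ← Nat.one_le_iff_ne_zero] at h0
      have hdeq : Finsupp.degree (m - Finsupp.single 0 1 + Finsupp.single 2 1)
          = Finsupp.degree m := by
        have A : (m - Finsupp.single 0 1 + Finsupp.single 2 1 : Fin 3 →₀ ℕ) 0 = m 0 - 1 := by
          simp [Finsupp.add_apply, Finsupp.tsub_apply,
            Finsupp.single_apply, Finsupp.single_eq_of_ne (show (2:Fin 3) ≠ 0 by decide)]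
        have B : (m - Finsupp.single 0 1 + Finsupp.single 2 1 : Fin 3 →₀ ℕ) 1 = m 1 := by
          simp [Finsupp.add_apply, Finsupp.tsub_apply,
            Finsupp.single_eq_of_ne (show (2:Fin 3) ≠ 1 by decide),
            Finsupp.single_eq_of_ne (show (0:Fin 3) ≠ 1 by decide)]
        have Cc : (m - Finsupp.single 0 1 + Finsupp.single 2 1 : Fin 3 →₀ ℕ) 2 = m 2 + 1 := by
          simp [Finsupp.add_apply, Finsupp.tsub_apply,
            Finsupp.single_eq_of_ne (show (0:Fin 3) ≠ 2 by decide)]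
        rw [deg3, deg3, A, B, Cc]
        omega
      rw [← hdeq]
      exact degree_le_totalDegree (MvPolynomial.mem_support_iff.2 hco)
    have htd : (X 0 * pderiv 2 w).totalDegree ≤ w.totalDegree :=
      Finset.sup_le fun m hm => hsupp m (MvPolynomial.mem_support_iff.1 hm)
    have hadd := totalDegree_add_le_totalDegree_mul hw0 hcne
    rw [← hc] at hadd
    have hc0 : c.totalDegree = 0 := by omega
    have hcC := eq_C_of_totalDegree_eq_zero hc0
    set lam := coeff 0 c with hlam
    have hlamne : lam ≠ 0 := fun h => hcne (by rw [hcC, h, map_zero])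
    have key : ∀ m : Fin 3 →₀ ℕ, coeff m (X 0 * pderiv 2 w) = lam * coeff m w := by
      intro m; rw [hc, hcC, mul_comm w (C lam), coeff_C_mul]
    have hsupp0 : ∀ m ∈ w.support, (0 : Fin 3) ∈ m.support := by
      intro m hm
      by_contra h0
      have hk := key m
      rw [coeff_X_mul', if_neg h0] at hk
      exact MvPolynomial.mem_support_iff.1 hm
        ((mul_eq_zero.mp hk.symm).resolve_left hlamne)
    obtain ⟨m', hm', hmax⟩ :=
      Finset.exists_max_image w.support (fun m => m 2) (support_nonempty.2 hw0)
    have hk := key m'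
    rw [coeff_X_mul', if_pos (hsupp0 m' hm'), coeff_pderiv'] at hk
    have hzero : coeff (m' - Finsupp.single 0 1 + Finsupp.single 2 1) w = 0 := by
      by_contra hco
      have hmem := MvPolynomial.mem_support_iff.2 hco
      have hle := hmax _ hmem
      have : (m' - Finsupp.single 0 1 + Finsupp.single 2 1 : Fin 3 →₀ ℕ) 2 = m' 2 + 1 := by
        simp [Finsupp.add_apply, Finsupp.tsub_apply,
          Finsupp.single_eq_of_ne (show (0:Fin 3) ≠ 2 by decide)]
      omega
    rw [hzero, mul_zero] at hk
    exact MvPolynomial.mem_support_iff.1 hm'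
      ((mul_eq_zero.mp hk.symm).resolve_left hlamne)
  -- every monomial of w has zero exponent in variable 2
  have hm2 : ∀ m : Fin 3 →₀ ℕ, coeff m w ≠ 0 → m 2 = 0 := by
    intro m hm
    have hk := coeff_X_mul_pderiv 2 w m
    rw [h2, mul_zero, coeff_zero] at hk
    have := (mul_eq_zero.mp hk.symm).resolve_right hm
    exact_mod_cast Nat.cast_eq_zero.mp this
  -- membership in k[u₁,u₂]
  have hmem : w ∈ Algebra.adjoin k ({X 0, X 1} : Set (MvPolynomial (Fin 3) k)) := by
    have himg : (X '' ({0, 1} : Set (Fin 3)) : Set (MvPolynomial (Fin 3) k)) = {X 0, X 1} := by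
      simp [Set.image_insert_eq]
    rw [← himg, ← supported_eq_adjoin_X, mem_supported]
    intro i hi
    simp only [Finset.mem_coe] at hi
    rw [mem_vars] at hi
    obtain ⟨m, hm, him⟩ := hi
    fin_cases i
    · exact Set.mem_insert _ _
    · exact Set.mem_insert_of_mem _ rfl
    · exfalso
      rw [Finsupp.mem_support_iff] at him
      exact him (hm2 m (MvPolynomial.mem_support_iff.1 hm))
  refine ⟨hmem, ?_⟩
  -- Euler relation
  have hE : w ∣ X 0 * pderiv 0 w + X 1 * pderiv 1 w := by
    have h := (Ideal.mem_span_singleton).1 (hw (X 2))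
    have e : linBracket w (X 2) = X 0 * pderiv 0 w + X 1 * pderiv 1 w := by
      simp only [linBracket, pderiv_X_self,
        pderiv_X_of_ne (show (2 : Fin 3) ≠ 0 by decide),
        pderiv_X_of_ne (show (2 : Fin 3) ≠ 1 by decide)]
      ring
    rwa [e] at h
  set E := X 0 * pderiv 0 w + X 1 * pderiv 1 w with hEdef
  have coeffE : ∀ m : Fin 3 →₀ ℕ, coeff m E = ((m 0 : k) + m 1) * coeff m w := by
    intro m
    rw [hEdef, coeff_add, coeff_X_mul_pderiv, coeff_X_mul_pderiv]; ring
  by_cases hE0 : E = 0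
  · refine ⟨0, fun m hm => ?_⟩
    have h01 : (m 0 : k) + m 1 = 0 := by
      have hk := coeffE m
      rw [hE0, coeff_zero] at hk
      exact (mul_eq_zero.mp hk.symm).resolve_right hm
    have h01' : m 0 + m 1 = 0 := by exact_mod_cast h01
    rw [Pi.one_def, ← Finsupp.degree_eq_weight_one, deg3, hm2 m hm]
    omega
  · obtain ⟨c, hc⟩ := hE
    have hcne : c ≠ 0 := by rintro rfl; rw [mul_zero] at hc; exact hE0 hc
    have hsub : E.support ⊆ w.support := by
      intro m hm
      rw [MvPolynomial.mem_support_iff] at hm ⊢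
      intro h; exact hm (by rw [coeffE, h, mul_zero])
    have htd : E.totalDegree ≤ w.totalDegree := totalDegree_le_of_support_subset hsub
    have hadd := totalDegree_add_le_totalDegree_mul hw0 hcne
    rw [← hc] at hadd
    have hc0 : c.totalDegree = 0 := by omega
    have hcC := eq_C_of_totalDegree_eq_zero hc0
    set lam := coeff 0 c with hlam
    have key : ∀ m : Fin 3 →₀ ℕ, ((m 0 : k) + m 1) * coeff m w = lam * coeff m w := by
      intro m; rw [← coeffE, hc, hcC, mul_comm w (C lam), coeff_C_mul]
    obtain ⟨m₀, hm₀⟩ := support_nonempty.2 hw0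
    have hm₀ne := MvPolynomial.mem_support_iff.1 hm₀
    have hlam₀ : lam = ((m₀ 0 : k) + m₀ 1) := (mul_right_cancel₀ hm₀ne (key m₀)).symm
    refine ⟨m₀ 0 + m₀ 1, fun m hm => ?_⟩
    have hcast : (m 0 : k) + m 1 = (m₀ 0 : k) + m₀ 1 := by
      rw [← hlam₀]; exact mul_right_cancel₀ hm (key m)
    have hnat : m 0 + m 1 = m₀ 0 + m₀ 1 := by exact_mod_cast hcast
    rw [Pi.one_def, ← Finsupp.degree_eq_weight_one, deg3, hm2 m hm]
    omega
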